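/- arXiv:2102.09434 — 3 statements merged into one kernel-verified Lean document; each statement's English description precedes it below -/
import Mathlib

section
/- With the notation of the MFG fixed-point map, suppose r̃ : [0,T] → ℝⁿ is given, X̃ solves dX̃_t/dt = (A − BR⁻¹Bᵀη_t)X̃_t − BR⁻¹Bᵀr̃_t with X̃₀ = 0, and r̃' solves the terminal-value ODE dr̃'_t/dt = (η_tBR⁻¹Bᵀ − Aᵀ)r̃_t − FᵀX̃_t, r̃'_T = 0. Then sup_{0≤t≤T}‖r̃'_t‖² ≤ c_T · sup_{0≤t≤T}‖r̃_t‖², where c_T = T·exp(T(‖A‖ + ‖BR⁻¹Bᵀ‖‖η‖_T + ‖Fᵀ‖))·(‖Aᵀ‖ + (‖η‖_T + T‖Fᵀ‖·exp(T(2‖A‖ + (2‖η‖_T + 1)‖BR⁻¹Bᵀ‖)))·‖BR⁻¹Bᵀ‖). Moreover c_T → 0 as T → 0. -/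
open MeasureTheory Filter

noncomputable section

/-- The rank-one operator `B R⁻¹ Bᵀ` built from the column vector `b` and the scalar `R`. -/
def Kop {n : ℕ} (R : ℝ) (b : EuclideanSpace ℝ (Fin n)) :
    EuclideanSpace ℝ (Fin n) →L[ℝ] EuclideanSpace ℝ (Fin n) :=
  R⁻¹ • ((innerSL ℝ b).smulRight b)

/-- The contraction constant `c_T` of the MFG fixed-point map:
`c_T = T e^{T(‖A‖+‖K‖‖η‖_T+‖Fᵀ‖)} (‖Aᵀ‖ + (‖η‖_T + T‖Fᵀ‖ e^{T(2‖A‖+(2‖η‖_T+1)‖K‖)})‖K‖)`. -/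
def cT (T nA nAt nK nEta nFt : ℝ) : ℝ :=
  T * Real.exp (T * (nA + nK * nEta + nFt)) *
    (nAt + (nEta + T * nFt * Real.exp (T * (2 * nA + (2 * nEta + 1) * nK))) * nK)

/-!
Both bounds are energy estimates. For a trajectory `f` vanishing at one end of `[0, T]`,
`d/dt ‖f‖² = 2⟪f, f'⟫ ≤ 2‖f‖‖f'‖`; bounding `‖f'‖` linearly by `‖f‖` and the forcing terms and
splitting the cross terms with `2uv ≤ u² + v²` gives `d/dt ‖f‖² ≤ L‖f‖² + ε`, so Grönwall yields
`‖f t‖² ≤ ε T e^{LT}`. Applied forward to `X̃` (forced by `r̃`), this bounds `‖X̃‖²` by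
`‖K‖ T e^{T(2‖A‖ + (2‖η‖_T + 1)‖K‖)} sup ‖r̃‖²`; applied backward from `T` to `r̃'` (forced by `r̃`
and `X̃`), it gives exactly `c_T sup ‖r̃‖²`. Finally `c_T` is continuous in `T` and vanishes at `0`.
-/

open Set Real Topology

lemma gronwallBound_zero_le_mul_exp {K ε : ℝ} (x : ℝ) (hK : 0 ≤ K) (hε : 0 ≤ ε) :
    gronwallBound 0 K ε x ≤ ε * x * exp (K * x) := by
  rcases hK.eq_or_lt with rfl | hK
  · simp [gronwallBound_K0]
  · have hexp : exp (K * x) - 1 ≤ K * x * exp (K * x) := by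
      have h := mul_le_mul_of_nonneg_right (one_sub_le_exp_neg (K * x)) (exp_pos (K * x)).le
      rw [exp_neg, inv_mul_cancel₀ (exp_pos _).ne', sub_mul, one_mul] at h
      linarith
    calc gronwallBound 0 K ε x = ε / K * (exp (K * x) - 1) := by
          simp [gronwallBound_of_K_ne_0 hK.ne']
      _ ≤ ε / K * (K * x * exp (K * x)) := by gcongr
      _ = ε * x * exp (K * x) := by field_simp

lemma le_ciSup_Icc_of_continuousOn {f : ℝ → ℝ} {a b t : ℝ} (hf : ContinuousOn f (Icc a b))
    (ht : t ∈ Icc a b) : f t ≤ ⨆ s : Icc a b, f s := by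
  refine le_ciSup (f := fun s : Icc a b => f s) ?_ ⟨t, ht⟩
  rw [← image_eq_range]
  exact isCompact_Icc.bddAbove_image hf

theorem tendsto_cT_nhdsGT_zero (nA nAt nK nEta nFt : ℝ) :
    Tendsto (fun τ => cT τ nA nAt nK nEta nFt) (𝓝[>] 0) (𝓝 0) := by
  have hc : Continuous (fun τ => cT τ nA nAt nK nEta nFt) := by unfold cT; fun_prop
  simpa [cT] using hc.continuousWithinAt (s := Ioi 0) (x := 0) |>.tendsto

section EnergyEstimates

variable {E : Type*} [NormedAddCommGroup E] [InnerProductSpace ℝ E]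

theorem norm_sq_le_of_energy_le {f d : ℝ → E} {T K ε : ℝ} (hK : 0 ≤ K) (hε : 0 ≤ ε)
    (h0 : f 0 = 0) (hf : ∀ t ∈ Icc 0 T, HasDerivAt f (d t) t)
    (henergy : ∀ t ∈ Icc 0 T, 2 * ‖f t‖ * ‖d t‖ ≤ K * ‖f t‖ ^ 2 + ε) :
    ∀ t ∈ Icc 0 T, ‖f t‖ ^ 2 ≤ ε * T * exp (K * T) := by
  intro t ht
  have hderiv : ∀ s ∈ Ico 0 T, ‖2 * inner ℝ (f s) (d s)‖ ≤ K * ‖‖f s‖ ^ 2‖ + ε := by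
    intro s hs
    have hs' := Ico_subset_Icc_self hs
    have hinner := abs_real_inner_le_norm (f s) (d s)
    rw [norm_mul, norm_pow, Real.norm_ofNat, norm_norm, Real.norm_eq_abs]
    linarith [henergy s hs']
  have hgron := norm_le_gronwallBound_of_norm_deriv_right_le
    (f := fun s => ‖f s‖ ^ 2) (δ := 0) (fun s hs => (hf s hs).norm_sq.continuousAt.continuousWithinAt)
    (fun s hs => (hf s (Ico_subset_Icc_self hs)).norm_sq.hasDerivWithinAt)
    (by simp [h0]) hderiv t ht
  rw [norm_pow, norm_norm, sub_zero] at hgron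
  calc ‖f t‖ ^ 2 ≤ gronwallBound 0 K ε t := hgron
    _ ≤ gronwallBound 0 K ε T := gronwallBound_mono (le_refl (0 : ℝ)) hε hK ht.2
    _ ≤ ε * T * exp (K * T) := gronwallBound_zero_le_mul_exp T hK hε

theorem norm_sq_le_of_energy_le_of_terminal {g d : ℝ → E} {T K ε : ℝ} (hK : 0 ≤ K)
    (hε : 0 ≤ ε) (hT : g T = 0) (hg : ∀ t ∈ Icc 0 T, HasDerivAt g (d t) t)
    (henergy : ∀ t ∈ Icc 0 T, 2 * ‖g t‖ * ‖d t‖ ≤ K * ‖g t‖ ^ 2 + ε) :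
    ∀ t ∈ Icc 0 T, ‖g t‖ ^ 2 ≤ ε * T * exp (K * T) := by
  have hrefl : ∀ s ∈ Icc 0 T, T - s ∈ Icc 0 T := fun s hs => ⟨by linarith [hs.2], by linarith [hs.1]⟩
  intro t ht
  have h := norm_sq_le_of_energy_le (f := fun s => g (T - s)) (d := fun s => -d (T - s)) hK hε
    (by simpa using hT) (fun s hs => (hg _ (hrefl s hs)).comp_const_sub T s)
    (fun s hs => by simpa using henergy _ (hrefl s hs)) (T - t) (hrefl t ht)
  simpa using h

theorem norm_sq_le_of_forced_linear_ode {M : ℝ → E →L[ℝ] E} {K : E →L[ℝ] E} {x r : ℝ → E}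
    {T a S : ℝ} (hM : ∀ t ∈ Icc 0 T, ‖M t‖ ≤ a) (hr : ∀ t ∈ Icc 0 T, ‖r t‖ ^ 2 ≤ S)
    (hx0 : x 0 = 0) (hx : ∀ t ∈ Icc 0 T, HasDerivAt x (M t (x t) - K (r t)) t) :
    ∀ t ∈ Icc 0 T, ‖x t‖ ^ 2 ≤ ‖K‖ * S * T * exp ((2 * a + ‖K‖) * T) := by
  intro t ht
  have h0 : (0 : ℝ) ∈ Icc 0 T := ⟨le_rfl, ht.1.trans ht.2⟩
  have ha : 0 ≤ a := (norm_nonneg _).trans (hM 0 h0)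
  have hS : 0 ≤ S := (sq_nonneg _).trans (hr 0 h0)
  refine norm_sq_le_of_energy_le (by positivity) (by positivity) hx0 hx ?_ t ht
  intro s hs
  have hd : ‖M s (x s) - K (r s)‖ ≤ a * ‖x s‖ + ‖K‖ * ‖r s‖ := by
    refine (norm_sub_le _ _).trans (add_le_add ?_ (K.le_opNorm _))
    exact (M s).le_of_opNorm_le (hM s hs) _
  have hcross := mul_le_mul_of_nonneg_left (two_mul_le_add_sq ‖x s‖ ‖r s‖) (norm_nonneg K)
  nlinarith [mul_le_mul_of_nonneg_left hd (by positivity : (0 : ℝ) ≤ 2 * ‖x s‖),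
    mul_le_mul_of_nonneg_left (hr s hs) (norm_nonneg K)]

theorem norm_sq_le_of_forced_linear_ode_of_terminal {N : ℝ → E →L[ℝ] E} {G : E →L[ℝ] E}
    {y r y' : ℝ → E} {T p S Y : ℝ} (hN : ∀ t ∈ Icc 0 T, ‖N t‖ ≤ p)
    (hr : ∀ t ∈ Icc 0 T, ‖r t‖ ^ 2 ≤ S) (hy : ∀ t ∈ Icc 0 T, ‖y t‖ ^ 2 ≤ Y) (hT : y' T = 0)
    (hy' : ∀ t ∈ Icc 0 T, HasDerivAt y' (N t (r t) - G (y t)) t) :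
    ∀ t ∈ Icc 0 T, ‖y' t‖ ^ 2 ≤ (p * S + ‖G‖ * Y) * T * exp ((p + ‖G‖) * T) := by
  intro t ht
  have h0 : (0 : ℝ) ∈ Icc 0 T := ⟨le_rfl, ht.1.trans ht.2⟩
  have hp : 0 ≤ p := (norm_nonneg _).trans (hN 0 h0)
  have hS : 0 ≤ S := (sq_nonneg _).trans (hr 0 h0)
  have hY : 0 ≤ Y := (sq_nonneg _).trans (hy 0 h0)
  refine norm_sq_le_of_energy_le_of_terminal (by positivity) (by positivity) hT hy' ?_ t ht
  intro s hs
  have hd : ‖N s (r s) - G (y s)‖ ≤ p * ‖r s‖ + ‖G‖ * ‖y s‖ := by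
    refine (norm_sub_le _ _).trans (add_le_add ?_ (G.le_opNorm _))
    exact (N s).le_of_opNorm_le (hN s hs) _
  have hcross_r := mul_le_mul_of_nonneg_left (two_mul_le_add_sq ‖y' s‖ ‖r s‖) hp
  have hcross_y := mul_le_mul_of_nonneg_left (two_mul_le_add_sq ‖y' s‖ ‖y s‖) (norm_nonneg G)
  nlinarith [mul_le_mul_of_nonneg_left hd (by positivity : (0 : ℝ) ≤ 2 * ‖y' s‖),
    mul_le_mul_of_nonneg_left (hr s hs) hp, mul_le_mul_of_nonneg_left (hy s hs) (norm_nonneg G)]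

end EnergyEstimates

theorem statement6_general
    {n : ℕ} (T : ℝ) (hT : 0 < T)
    (A F : EuclideanSpace ℝ (Fin n) →L[ℝ] EuclideanSpace ℝ (Fin n))
    (b : EuclideanSpace ℝ (Fin n)) (R : ℝ)
    (η : ℝ → (EuclideanSpace ℝ (Fin n) →L[ℝ] EuclideanSpace ℝ (Fin n)))
    (hη : ContinuousOn η (Set.Icc 0 T))
    (rt rt' Xt : ℝ → EuclideanSpace ℝ (Fin n))
    (hrcont : ContinuousOn rt (Set.Icc 0 T))
    (hX0 : Xt 0 = 0)
    (hXode : ∀ t ∈ Set.Icc (0:ℝ) T,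
      HasDerivAt Xt ((A - (Kop R b).comp (η t)) (Xt t) - Kop R b (rt t)) t)
    (hrT : rt' T = 0)
    (hrode : ∀ t ∈ Set.Icc (0:ℝ) T,
      HasDerivAt rt' (((η t).comp (Kop R b) - ContinuousLinearMap.adjoint A) (rt t)
        - ContinuousLinearMap.adjoint F (Xt t)) t) :
    (⨆ t : Set.Icc (0:ℝ) T, ‖rt' ↑t‖ ^ 2) ≤
        cT T ‖A‖ ‖ContinuousLinearMap.adjoint A‖ ‖Kop R b‖
          (⨆ t : Set.Icc (0:ℝ) T, ‖η ↑t‖) ‖ContinuousLinearMap.adjoint F‖ *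
        (⨆ t : Set.Icc (0:ℝ) T, ‖rt ↑t‖ ^ 2)
      ∧ Tendsto (fun τ => cT τ ‖A‖ ‖ContinuousLinearMap.adjoint A‖ ‖Kop R b‖
          (⨆ t : Set.Icc (0:ℝ) T, ‖η ↑t‖) ‖ContinuousLinearMap.adjoint F‖)
          (nhdsWithin 0 (Set.Ioi 0)) (nhds 0) := by
  set K := Kop R b
  set Me := ⨆ t : Icc (0:ℝ) T, ‖η ↑t‖
  set S := ⨆ t : Icc (0:ℝ) T, ‖rt ↑t‖ ^ 2
  have hηMe : ∀ t ∈ Icc 0 T, ‖η t‖ ≤ Me := fun t ht => le_ciSup_Icc_of_continuousOn hη.norm ht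
  have hrS : ∀ t ∈ Icc 0 T, ‖rt t‖ ^ 2 ≤ S := fun t ht =>
    le_ciSup_Icc_of_continuousOn (hrcont.norm.pow 2) ht
  have hX := norm_sq_le_of_forced_linear_ode (a := ‖A‖ + ‖K‖ * Me)
    (fun t ht => norm_sub_le_of_le le_rfl <|
      (K.opNorm_comp_le _).trans (mul_le_mul_of_nonneg_left (hηMe t ht) (norm_nonneg K)))
    hrS hX0 hXode
  have hr' := norm_sq_le_of_forced_linear_ode_of_terminal (p := Me * ‖K‖ + ‖A.adjoint‖)
    (fun t ht => norm_sub_le_of_le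
      (((η t).opNorm_comp_le K).trans (mul_le_mul_of_nonneg_right (hηMe t ht) (norm_nonneg K)))
      le_rfl)
    hrS hX hrT hrode
  have : Nonempty (Icc (0:ℝ) T) := ⟨⟨0, le_rfl, hT.le⟩⟩
  refine ⟨ciSup_le fun t => (hr' t t.2).trans_eq ?_, tendsto_cT_nhdsGT_zero _ _ _ _ _⟩
  rw [cT, LinearIsometryEquiv.norm_map]
  ring_nf

/-- Step 2, contraction estimate: with `X̃` driven by `r̃` as in Step 1 and
`r̃'` solving the backward ODE `dr̃'_t/dt = (η_tBR⁻¹Bᵀ − Aᵀ)r̃_t − FᵀX̃_t`, `r̃'_T = 0`,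
`sup_t ‖r̃'_t‖² ≤ c_T sup_t ‖r̃_t‖²`; moreover `c_T → 0` as `T → 0⁺`. -/
theorem statement6
    {n : ℕ} (hn : 1 ≤ n) (T : ℝ) (hT : 0 < T)
    (A F : EuclideanSpace ℝ (Fin n) →L[ℝ] EuclideanSpace ℝ (Fin n))
    (b : EuclideanSpace ℝ (Fin n)) (R : ℝ) (hR : 0 < R)
    (η : ℝ → (EuclideanSpace ℝ (Fin n) →L[ℝ] EuclideanSpace ℝ (Fin n)))
    (hη : ContinuousOn η (Set.Icc 0 T))
    (rt rt' Xt : ℝ → EuclideanSpace ℝ (Fin n))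
    (hrcont : ContinuousOn rt (Set.Icc 0 T))
    (hX0 : Xt 0 = 0)
    (hXode : ∀ t ∈ Set.Icc (0:ℝ) T,
      HasDerivAt Xt ((A - (Kop R b).comp (η t)) (Xt t) - Kop R b (rt t)) t)
    (hrT : rt' T = 0)
    (hrode : ∀ t ∈ Set.Icc (0:ℝ) T,
      HasDerivAt rt' (((η t).comp (Kop R b) - ContinuousLinearMap.adjoint A) (rt t)
        - ContinuousLinearMap.adjoint F (Xt t)) t) :
    (⨆ t : Set.Icc (0:ℝ) T, ‖rt' ↑t‖ ^ 2) ≤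
        cT T ‖A‖ ‖ContinuousLinearMap.adjoint A‖ ‖Kop R b‖
          (⨆ t : Set.Icc (0:ℝ) T, ‖η ↑t‖) ‖ContinuousLinearMap.adjoint F‖ *
        (⨆ t : Set.Icc (0:ℝ) T, ‖rt ↑t‖ ^ 2)
      ∧ Tendsto (fun τ => cT τ ‖A‖ ‖ContinuousLinearMap.adjoint A‖ ‖Kop R b‖
          (⨆ t : Set.Icc (0:ℝ) T, ‖η ↑t‖) ‖ContinuousLinearMap.adjoint F‖)
          (nhdsWithin 0 (Set.Ioi 0)) (nhds 0) :=
  statement6_general T hT A F b R η hη rt rt' Xt hrcont hX0 hXode hrT hrode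

end
end

section
/- Fix T > 0, a continuous matrix-valued function η on [0,T], continuous vector-valued maps t ↦ C_t, H_t on [0,T], and x̄₀ ∈ ℝⁿ. Define Φ : C([0,T];ℝⁿ) → C([0,T];ℝⁿ) by: given X̄, let r solve −dr_t/dt = (Aᵀ − η_tBR⁻¹Bᵀ)r_t + η_tC_t + H_t + FᵀX̄_t, r_T = 0, and let Φ(X̄) solve dΦ(X̄)_t/dt = (A − BR⁻¹Bᵀη_t)Φ(X̄)_t − BR⁻¹Bᵀr_t + C_t, Φ(X̄)₀ = x̄₀. If the constant c_T from the contraction estimate satisfies c_T < 1, then Φ has a unique fixed point; equivalently, the coupled forward-backward ODE system (3.3b)–(3.3c) has a unique solution (r, X̄). -/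
open MeasureTheory

noncomputable section

/-!
The difference of the costates `ρ X̄ - ρ Ȳ` solves a linear backward ODE forced by
`Fᵀ (X̄ - Ȳ)`, and the difference of the states `Φ X̄ - Φ Ȳ` a linear forward ODE forced by
`B R⁻¹ Bᵀ (ρ X̄ - ρ Ȳ)`. Grönwall's inequality applied to each in turn bounds
`‖Φ X̄ - Φ Ȳ‖_∞` by `c_T ‖X̄ - Ȳ‖_∞`, so for `c_T < 1` the map `Φ` is a contraction of
`C([0,T]; ℝⁿ)` with the sup norm, and Banach's fixed point theorem applies.
-/

open Set

lemma exp_sub_one_le_mul_exp (y : ℝ) : Real.exp y - 1 ≤ y * Real.exp y := by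
  have h : Real.exp y * Real.exp (-y) = 1 := by rw [← Real.exp_add, add_neg_cancel, Real.exp_zero]
  nlinarith [Real.add_one_le_exp (-y), Real.exp_pos y]

lemma gronwallBound_zero_le {K ε x : ℝ} (hK : 0 ≤ K) (hε : 0 ≤ ε) :
    gronwallBound 0 K ε x ≤ ε * x * Real.exp (K * x) := by
  rcases hK.eq_or_lt with rfl | hK
  · simp [gronwallBound_K0]
  · simp only [gronwallBound_of_K_ne_0 hK.ne', zero_mul, zero_add]
    calc ε / K * (Real.exp (K * x) - 1) ≤ ε / K * (K * x * Real.exp (K * x)) := by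
          gcongr; exact exp_sub_one_le_mul_exp _
      _ = ε * x * Real.exp (K * x) := by field_simp

lemma norm_le_iSup_norm_Icc {F : Type*} [SeminormedAddCommGroup F] {f : ℝ → F} {a b s : ℝ}
    (hf : ContinuousOn f (Icc a b)) (hs : s ∈ Icc a b) : ‖f s‖ ≤ ⨆ t : Icc a b, ‖f t‖ := by
  refine le_ciSup (f := fun t : Icc a b => ‖f t‖) ?_ ⟨s, hs⟩
  simpa only [image_eq_range] using (isCompact_Icc.image_of_continuousOn hf.norm).bddAbove

section LinearODE

variable {E : Type*} [NormedAddCommGroup E] [NormedSpace ℝ E]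
  {L : ℝ → E →L[ℝ] E} {w f : ℝ → E} {k ε T : ℝ}

theorem norm_le_mul_exp_of_hasDerivAt_of_eq_zero_left {w' : ℝ → E} (hk : 0 ≤ k) (hε : 0 ≤ ε)
    (hw : ∀ t ∈ Icc 0 T, HasDerivAt w (w' t) t) (h0 : w 0 = 0)
    (bound : ∀ t ∈ Icc 0 T, ‖w' t‖ ≤ k * ‖w t‖ + ε) :
    ∀ t ∈ Icc 0 T, ‖w t‖ ≤ ε * T * Real.exp (k * T) := by
  intro t ht
  have hcont : ContinuousOn w (Icc 0 T) := fun s hs => (hw s hs).continuousAt.continuousWithinAt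
  calc ‖w t‖ ≤ gronwallBound 0 k ε (t - 0) :=
        norm_le_gronwallBound_of_norm_deriv_right_le hcont
          (fun s hs => (hw s (Ico_subset_Icc_self hs)).hasDerivWithinAt) (by simp [h0])
          (fun s hs => bound s (Ico_subset_Icc_self hs)) t ht
    _ ≤ gronwallBound 0 k ε T := gronwallBound_mono le_rfl hε hk (by linarith [ht.2])
    _ ≤ ε * T * Real.exp (k * T) := gronwallBound_zero_le hk hε

theorem norm_le_mul_exp_of_forward_linear_ode (hk : 0 ≤ k) (hε : 0 ≤ ε)
    (hL : ∀ t ∈ Icc 0 T, ‖L t‖ ≤ k) (hf : ∀ t ∈ Icc 0 T, ‖f t‖ ≤ ε)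
    (hw : ∀ t ∈ Icc 0 T, HasDerivAt w (L t (w t) + f t) t) (h0 : w 0 = 0) :
    ∀ t ∈ Icc 0 T, ‖w t‖ ≤ ε * T * Real.exp (k * T) := by
  refine norm_le_mul_exp_of_hasDerivAt_of_eq_zero_left hk hε hw h0 fun t ht => ?_
  calc ‖L t (w t) + f t‖ ≤ ‖L t‖ * ‖w t‖ + ‖f t‖ :=
        (norm_add_le _ _).trans (add_le_add_left ((L t).le_opNorm _) _)
    _ ≤ k * ‖w t‖ + ε := by gcongr <;> simp_all

theorem norm_le_mul_exp_of_backward_linear_ode (hk : 0 ≤ k) (hε : 0 ≤ ε)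
    (hL : ∀ t ∈ Icc 0 T, ‖L t‖ ≤ k) (hf : ∀ t ∈ Icc 0 T, ‖f t‖ ≤ ε)
    (hw : ∀ t ∈ Icc 0 T, HasDerivAt w (-(L t (w t) + f t)) t) (hT : w T = 0) :
    ∀ t ∈ Icc 0 T, ‖w t‖ ≤ ε * T * Real.exp (k * T) := by
  have reflect : ∀ s ∈ Icc 0 T, T - s ∈ Icc 0 T := fun s hs =>
    ⟨by linarith [hs.2], by linarith [hs.1]⟩
  have hrev : ∀ s ∈ Icc 0 T, HasDerivAt (fun s => w (T - s))
      (L (T - s) (w (T - s)) + f (T - s)) s := fun s hs => by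
    simpa [Function.comp_def, add_comm] using (hw (T - s) (reflect s hs)).scomp s ((hasDerivAt_id s).const_sub T)
  intro t ht
  simpa using norm_le_mul_exp_of_forward_linear_ode hk hε (fun s hs => hL _ (reflect s hs))
    (fun s hs => hf _ (reflect s hs)) hrev (by simpa using hT) (T - t) (reflect t ht)

end LinearODE

theorem exists_eqOn_fixedPoint_and_unique_of_dist_le {E : Type*} [MetricSpace E] [CompleteSpace E]
    [Nonempty E] {a b c : ℝ} (hab : a ≤ b) (hc : c < 1) {Φ : (ℝ → E) → ℝ → E}
    (hΦ : ∀ X, ContinuousOn X (Icc a b) → ContinuousOn (Φ X) (Icc a b))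
    (hlip : ∀ X Y, ContinuousOn X (Icc a b) → ContinuousOn Y (Icc a b) → ∀ δ, 0 ≤ δ →
      (∀ s ∈ Icc a b, dist (X s) (Y s) ≤ δ) → ∀ t ∈ Icc a b, dist (Φ X t) (Φ Y t) ≤ c * δ) :
    (∃ X, ContinuousOn X (Icc a b) ∧ EqOn (Φ X) X (Icc a b)) ∧
      ∀ X Y, ContinuousOn X (Icc a b) → ContinuousOn Y (Icc a b) →
        EqOn (Φ X) X (Icc a b) → EqOn (Φ Y) Y (Icc a b) → EqOn X Y (Icc a b) := by
  have : CompactSpace (Icc a b) := isCompact_iff_compactSpace.mp isCompact_Icc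
  have : Nonempty (Icc a b) := ⟨⟨a, left_mem_Icc.2 hab⟩⟩
  have : Nonempty C(Icc a b, E) := ⟨.const _ (Classical.arbitrary E)⟩
  let restrictC (X : ℝ → E) (hX : ContinuousOn X (Icc a b)) : C(Icc a b, E) :=
    ⟨(Icc a b).domRestrict X, hX.domRestrict⟩
  have dist_le_restrictC {X Y : ℝ → E} (hX : ContinuousOn X (Icc a b))
      (hY : ContinuousOn Y (Icc a b)) : ∀ s ∈ Icc a b, dist (X s) (Y s) ≤
        dist (restrictC X hX) (restrictC Y hY) := fun s hs =>
    ContinuousMap.dist_apply_le_dist (f := restrictC X hX) (g := restrictC Y hY) ⟨s, hs⟩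
  let extend (f : C(Icc a b, E)) : ℝ → E := f ∘ projIcc a b hab
  have hextend (f : C(Icc a b, E)) : ContinuousOn (extend f) (Icc a b) :=
    (f.continuous.comp continuous_projIcc).continuousOn
  let G (f : C(Icc a b, E)) : C(Icc a b, E) := restrictC (Φ (extend f)) (hΦ _ (hextend f))
  have hG : ContractingWith c.toNNReal G := by
    refine ⟨Real.toNNReal_lt_one.2 hc, LipschitzWith.of_dist_le_mul fun f g => ?_⟩
    refine ContinuousMap.dist_le_iff_of_nonempty.2 fun s => ?_
    refine (hlip _ _ (hextend f) (hextend g) (dist f g) dist_nonneg (fun s _ => ?_) s s.2).trans ?_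
    · exact ContinuousMap.dist_apply_le_dist (f := f) (g := g) _
    · exact mul_le_mul_of_nonneg_right (Real.le_coe_toNNReal c) dist_nonneg
  constructor
  · refine ⟨extend (hG.fixedPoint G), hextend _, fun t ht => ?_⟩
    simpa [G, extend, restrictC, projIcc_of_mem hab ht] using
      DFunLike.congr_fun hG.fixedPoint_isFixedPt ⟨t, ht⟩
  · intro X Y hX hY hXfix hYfix
    set δ := dist (restrictC X hX) (restrictC Y hY)
    have hδ : δ ≤ c * δ := ContinuousMap.dist_le_iff_of_nonempty.2 fun s => by
      simpa [restrictC, hXfix s.2, hYfix s.2] using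
        hlip X Y hX hY δ dist_nonneg (dist_le_restrictC hX hY) s s.2
    have hδ0 : δ ≤ 0 := by nlinarith [dist_nonneg (x := restrictC X hX) (y := restrictC Y hY)]
    exact fun s hs => dist_le_zero.1 ((dist_le_restrictC hX hY s hs).trans hδ0)

section Estimates

variable {E : Type*} [NormedAddCommGroup E] [NormedSpace ℝ E] {A K : E →L[ℝ] E}
  {η : ℝ → E →L[ℝ] E} {C : ℝ → E} {e T : ℝ}

lemma norm_costate_sub_le {A' F' : E →L[ℝ] E} {H X Y r₁ r₂ : ℝ → E} {δ : ℝ} (he : 0 ≤ e)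
    (hη : ∀ t ∈ Icc 0 T, ‖η t‖ ≤ e) (hδ : 0 ≤ δ) (hXY : ∀ t ∈ Icc 0 T, ‖X t - Y t‖ ≤ δ)
    (hr₁ : ∀ t ∈ Icc 0 T, HasDerivAt r₁
      (-((A' - (η t).comp K) (r₁ t) + η t (C t) + H t + F' (X t))) t)
    (hr₂ : ∀ t ∈ Icc 0 T, HasDerivAt r₂
      (-((A' - (η t).comp K) (r₂ t) + η t (C t) + H t + F' (Y t))) t)
    (hr₁T : r₁ T = 0) (hr₂T : r₂ T = 0) :
    ∀ t ∈ Icc 0 T, ‖r₁ t - r₂ t‖ ≤ ‖F'‖ * δ * T * Real.exp ((‖A'‖ + e * ‖K‖) * T) := by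
  refine norm_le_mul_exp_of_backward_linear_ode (L := fun t => A' - (η t).comp K)
    (w := fun t => r₁ t - r₂ t) (f := fun t => F' (X t - Y t)) (by positivity) (by positivity) (fun t ht => ?_)
    (fun t ht => ?_) (fun t ht => ?_) (by rw [hr₁T, hr₂T, sub_self])
  · calc ‖A' - (η t).comp K‖ ≤ ‖A'‖ + ‖η t‖ * ‖K‖ :=
          (norm_sub_le _ _).trans (add_le_add le_rfl (ContinuousLinearMap.opNorm_comp_le _ _))
      _ ≤ ‖A'‖ + e * ‖K‖ := by gcongr; exact hη t ht
  · exact (F'.le_opNorm _).trans (mul_le_mul_of_nonneg_left (hXY t ht) (norm_nonneg _))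
  · refine ((hr₁ t ht).sub (hr₂ t ht)).congr_deriv ?_
    simp only [map_sub]
    abel

lemma norm_state_sub_le {r₁ r₂ u₁ u₂ : ℝ → E} {M : ℝ} (he : 0 ≤ e)
    (hη : ∀ t ∈ Icc 0 T, ‖η t‖ ≤ e) (hM : 0 ≤ M) (hr : ∀ t ∈ Icc 0 T, ‖r₁ t - r₂ t‖ ≤ M)
    (hu₁ : ∀ t ∈ Icc 0 T, HasDerivAt u₁ ((A - K.comp (η t)) (u₁ t) - K (r₁ t) + C t) t)
    (hu₂ : ∀ t ∈ Icc 0 T, HasDerivAt u₂ ((A - K.comp (η t)) (u₂ t) - K (r₂ t) + C t) t)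
    (h0 : u₁ 0 = u₂ 0) :
    ∀ t ∈ Icc 0 T, ‖u₁ t - u₂ t‖ ≤ ‖K‖ * M * T * Real.exp ((‖A‖ + ‖K‖ * e) * T) := by
  refine norm_le_mul_exp_of_forward_linear_ode (L := fun t => A - K.comp (η t))
    (w := fun t => u₁ t - u₂ t) (f := fun t => -K (r₁ t - r₂ t)) (by positivity) (by positivity) (fun t ht => ?_)
    (fun t ht => ?_) (fun t ht => ?_) (by rw [h0, sub_self])
  · calc ‖A - K.comp (η t)‖ ≤ ‖A‖ + ‖K‖ * ‖η t‖ :=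
          (norm_sub_le _ _).trans (add_le_add le_rfl (ContinuousLinearMap.opNorm_comp_le _ _))
      _ ≤ ‖A‖ + ‖K‖ * e := by gcongr; exact hη t ht
  · rw [norm_neg]
    exact (K.le_opNorm _).trans (mul_le_mul_of_nonneg_left (hr t ht) (norm_nonneg _))
  · refine ((hu₁ t ht).sub (hu₂ t ht)).congr_deriv ?_
    simp only [map_sub]
    abel

end Estimates

lemma mul_exp_mul_exp_le_cT {T a k e f δ : ℝ} (hT : 0 ≤ T) (ha : 0 ≤ a) (hk : 0 ≤ k)
    (he : 0 ≤ e) (hf : 0 ≤ f) (hδ : 0 ≤ δ) :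
    k * (f * δ * T * Real.exp ((a + e * k) * T)) * T * Real.exp ((a + k * e) * T) ≤
      cT T a a k e f * δ := by
  have hexp : Real.exp ((a + e * k) * T) * Real.exp ((a + k * e) * T) ≤
      Real.exp (T * (a + k * e + f)) * Real.exp (T * (2 * a + (2 * e + 1) * k)) := by
    rw [← Real.exp_add, ← Real.exp_add, Real.exp_le_exp]
    nlinarith [mul_nonneg hT hf, mul_nonneg hT ha, mul_nonneg hT hk, mul_nonneg hT (mul_nonneg he hk)]
  calc k * (f * δ * T * Real.exp ((a + e * k) * T)) * T * Real.exp ((a + k * e) * T)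
      = T * (T * f * k * δ) * (Real.exp ((a + e * k) * T) * Real.exp ((a + k * e) * T)) := by
        ring
    _ ≤ T * (T * f * k * δ) *
        (Real.exp (T * (a + k * e + f)) * Real.exp (T * (2 * a + (2 * e + 1) * k))) := by
        gcongr
    _ = T * Real.exp (T * (a + k * e + f)) *
        (T * f * Real.exp (T * (2 * a + (2 * e + 1) * k)) * k) * δ := by ring
    _ ≤ cT T a a k e f * δ := by
        unfold cT
        refine mul_le_mul_of_nonneg_right (mul_le_mul_of_nonneg_left ?_ (by positivity)) hδ
        nlinarith [mul_nonneg he hk]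

theorem statement7_general
    {n : ℕ} (T : ℝ) (hT : 0 < T)
    (A F : EuclideanSpace ℝ (Fin n) →L[ℝ] EuclideanSpace ℝ (Fin n))
    (b : EuclideanSpace ℝ (Fin n)) (R : ℝ)
    (η : ℝ → (EuclideanSpace ℝ (Fin n) →L[ℝ] EuclideanSpace ℝ (Fin n)))
    (hη : ContinuousOn η (Set.Icc 0 T))
    (C H : ℝ → EuclideanSpace ℝ (Fin n))
    (xbar₀ : EuclideanSpace ℝ (Fin n))
    (Φ ρ : (ℝ → EuclideanSpace ℝ (Fin n)) → (ℝ → EuclideanSpace ℝ (Fin n)))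
    -- ρ(X̄) solves the backward ODE (3.3b):
    -- −dr_t/dt = (Aᵀ − η_tBR⁻¹Bᵀ)r_t + η_tC_t + H_t + FᵀX̄_t, r_T = 0
    (hρT : ∀ Xb : ℝ → EuclideanSpace ℝ (Fin n), ContinuousOn Xb (Set.Icc 0 T) → ρ Xb T = 0)
    (hρode : ∀ Xb : ℝ → EuclideanSpace ℝ (Fin n), ContinuousOn Xb (Set.Icc 0 T) →
      ∀ t ∈ Set.Icc (0:ℝ) T, HasDerivAt (ρ Xb)
        (-((ContinuousLinearMap.adjoint A - (η t).comp (Kop R b)) (ρ Xb t)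
          + η t (C t) + H t + ContinuousLinearMap.adjoint F (Xb t))) t)
    -- Φ(X̄) solves the forward ODE (3.3c):
    -- dX̄_t/dt = (A − BR⁻¹Bᵀη_t)X̄_t − BR⁻¹Bᵀr_t + C_t, X̄₀ = x̄₀
    (hΦ0 : ∀ Xb : ℝ → EuclideanSpace ℝ (Fin n), ContinuousOn Xb (Set.Icc 0 T) →
      Φ Xb 0 = xbar₀)
    (hΦode : ∀ Xb : ℝ → EuclideanSpace ℝ (Fin n), ContinuousOn Xb (Set.Icc 0 T) →
      ∀ t ∈ Set.Icc (0:ℝ) T, HasDerivAt (Φ Xb)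
        ((A - (Kop R b).comp (η t)) (Φ Xb t) - Kop R b (ρ Xb t) + C t) t)
    (hΦcont : ∀ Xb : ℝ → EuclideanSpace ℝ (Fin n), ContinuousOn Xb (Set.Icc 0 T) →
      ContinuousOn (Φ Xb) (Set.Icc 0 T))
    -- the contraction constant is strictly less than one
    (hcT : cT T ‖A‖ ‖ContinuousLinearMap.adjoint A‖ ‖Kop R b‖
        (⨆ t : Set.Icc (0:ℝ) T, ‖η ↑t‖) ‖ContinuousLinearMap.adjoint F‖ < 1) :
    -- existence of a fixed point, unique among continuous paths up to equality on [0,T]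
    (∃ Xb : ℝ → EuclideanSpace ℝ (Fin n), ContinuousOn Xb (Set.Icc 0 T) ∧
        Set.EqOn (Φ Xb) Xb (Set.Icc 0 T))
      ∧ ∀ Xb Yb : ℝ → EuclideanSpace ℝ (Fin n),
          ContinuousOn Xb (Set.Icc 0 T) → ContinuousOn Yb (Set.Icc 0 T) →
          Set.EqOn (Φ Xb) Xb (Set.Icc 0 T) → Set.EqOn (Φ Yb) Yb (Set.Icc 0 T) →
          Set.EqOn Xb Yb (Set.Icc 0 T) := by
  have hη_le : ∀ t ∈ Icc 0 T, ‖η t‖ ≤ ⨆ s : Icc (0:ℝ) T, ‖η s‖ :=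
    fun t ht => norm_le_iSup_norm_Icc hη ht
  have hη_nonneg : 0 ≤ ⨆ s : Icc (0:ℝ) T, ‖η s‖ := Real.iSup_nonneg fun _ => norm_nonneg _
  rw [ContinuousLinearMap.adjoint.norm_map A] at hcT
  refine exists_eqOn_fixedPoint_and_unique_of_dist_le hT.le hcT hΦcont
    fun X Y hX hY δ hδ hXY t ht => ?_
  simp only [dist_eq_norm] at hXY ⊢
  have hcostate := norm_costate_sub_le hη_nonneg hη_le hδ hXY (hρode X hX) (hρode Y hY)
    (hρT X hX) (hρT Y hY)
  have hstate := norm_state_sub_le hη_nonneg hη_le (by positivity) hcostate (hΦode X hX)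
    (hΦode Y hY) ((hΦ0 X hX).trans (hΦ0 Y hY).symm)
  rw [ContinuousLinearMap.adjoint.norm_map A] at hstate
  exact (hstate t ht).trans
    (mul_exp_mul_exp_le_cT hT.le (norm_nonneg _) (norm_nonneg _) hη_nonneg (norm_nonneg _) hδ)

/-- the MFG fixed-point map `Φ` — sending `X̄` to the solution of the
forward ODE driven by the solution `r = ρ(X̄)` of the backward ODE — has a unique
fixed point (in the sup-norm space of continuous paths on `[0,T]`) whenever `c_T < 1`;
equivalently, the coupled forward-backward system (3.3b)-(3.3c) is uniquely solvable. -/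
theorem statement7
    {n : ℕ} (hn : 1 ≤ n) (T : ℝ) (hT : 0 < T)
    (A F : EuclideanSpace ℝ (Fin n) →L[ℝ] EuclideanSpace ℝ (Fin n))
    (b : EuclideanSpace ℝ (Fin n)) (R : ℝ) (hR : 0 < R)
    (η : ℝ → (EuclideanSpace ℝ (Fin n) →L[ℝ] EuclideanSpace ℝ (Fin n)))
    (hη : ContinuousOn η (Set.Icc 0 T))
    (C H : ℝ → EuclideanSpace ℝ (Fin n))
    (hC : ContinuousOn C (Set.Icc 0 T)) (hH : ContinuousOn H (Set.Icc 0 T))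
    (xbar₀ : EuclideanSpace ℝ (Fin n))
    (Φ ρ : (ℝ → EuclideanSpace ℝ (Fin n)) → (ℝ → EuclideanSpace ℝ (Fin n)))
    -- ρ(X̄) solves the backward ODE (3.3b):
    -- −dr_t/dt = (Aᵀ − η_tBR⁻¹Bᵀ)r_t + η_tC_t + H_t + FᵀX̄_t, r_T = 0
    (hρT : ∀ Xb : ℝ → EuclideanSpace ℝ (Fin n), ContinuousOn Xb (Set.Icc 0 T) → ρ Xb T = 0)
    (hρode : ∀ Xb : ℝ → EuclideanSpace ℝ (Fin n), ContinuousOn Xb (Set.Icc 0 T) →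
      ∀ t ∈ Set.Icc (0:ℝ) T, HasDerivAt (ρ Xb)
        (-((ContinuousLinearMap.adjoint A - (η t).comp (Kop R b)) (ρ Xb t)
          + η t (C t) + H t + ContinuousLinearMap.adjoint F (Xb t))) t)
    -- Φ(X̄) solves the forward ODE (3.3c):
    -- dX̄_t/dt = (A − BR⁻¹Bᵀη_t)X̄_t − BR⁻¹Bᵀr_t + C_t, X̄₀ = x̄₀
    (hΦ0 : ∀ Xb : ℝ → EuclideanSpace ℝ (Fin n), ContinuousOn Xb (Set.Icc 0 T) →
      Φ Xb 0 = xbar₀)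
    (hΦode : ∀ Xb : ℝ → EuclideanSpace ℝ (Fin n), ContinuousOn Xb (Set.Icc 0 T) →
      ∀ t ∈ Set.Icc (0:ℝ) T, HasDerivAt (Φ Xb)
        ((A - (Kop R b).comp (η t)) (Φ Xb t) - Kop R b (ρ Xb t) + C t) t)
    (hΦcont : ∀ Xb : ℝ → EuclideanSpace ℝ (Fin n), ContinuousOn Xb (Set.Icc 0 T) →
      ContinuousOn (Φ Xb) (Set.Icc 0 T))
    -- the contraction constant is strictly less than one
    (hcT : cT T ‖A‖ ‖ContinuousLinearMap.adjoint A‖ ‖Kop R b‖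
        (⨆ t : Set.Icc (0:ℝ) T, ‖η ↑t‖) ‖ContinuousLinearMap.adjoint F‖ < 1) :
    -- existence of a fixed point, unique among continuous paths up to equality on [0,T]
    (∃ Xb : ℝ → EuclideanSpace ℝ (Fin n), ContinuousOn Xb (Set.Icc 0 T) ∧
        Set.EqOn (Φ Xb) Xb (Set.Icc 0 T))
      ∧ ∀ Xb Yb : ℝ → EuclideanSpace ℝ (Fin n),
          ContinuousOn Xb (Set.Icc 0 T) → ContinuousOn Yb (Set.Icc 0 T) →
          Set.EqOn (Φ Xb) Xb (Set.Icc 0 T) → Set.EqOn (Φ Yb) Yb (Set.Icc 0 T) →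
          Set.EqOn Xb Yb (Set.Icc 0 T) :=
  statement7_general T hT A F b R η hη C H xbar₀ Φ ρ hρT hρode hΦ0 hΦode hΦcont hcT

end
end

section
/- Let X̄ : [0,T] → ℝⁿ with X̄₀ fixed. If u(t,X) = (1/2)Xᵀη_tX + Xᵀr_t + s_t where (η, r, s) solve the MFC system (Riccati equation for η; −dr_t/dt = (Aᵀ − η_tBR⁻¹Bᵀ)r_t + η_tC_t + H_t + FᵀX̄_t + FX̄_t, r_T = 0; s as in the MFG case), then u solves the MFC master HJB equation −∂_t u − tr(a D²u) = Ĥ(t, X, X̄_t, Du) + XᵀFX̄_t with terminal condition u(T,X) = XᵀS_TX + p₂R_e, where Ĥ is the reduced Hamiltonian. -/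
open Matrix intervalIntegral

/-!
The value function is a quadratic ansatz `u(t,X) = ½ Xᵀη_tX + Xᵀr_t + s_t`, so `Du = η_tX + r_t`
and both sides of the HJB equation are quadratic polynomials in `X`. Matching coefficients,
the quadratic terms agree by the Riccati equation for `η`, the linear terms by the ODE for `r`
(whose source `FᵀX̄ + FX̄` absorbs both mean-field couplings `X̄ᵀFX` and `XᵀFX̄`), and the
constant terms by the fundamental theorem of calculus applied to `s`; the trace term
`tr(aη)` in `∂ₜs` cancels the diffusion term. At `t = T`, `r_T = 0` and the integral vanishes.
-/

section Algebra

variable {ι α : Type*} [Fintype ι] [CommSemiring α]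

theorem Matrix.IsSymm.dotProduct_mulVec {M : Matrix ι ι α} (hM : M.IsSymm) (v w : ι → α) :
    v ⬝ᵥ M *ᵥ w = M *ᵥ v ⬝ᵥ w := by
  rw [Matrix.dotProduct_mulVec, ← mulVec_transpose, hM.eq]

end Algebra

section HJB

variable {ι : Type*} [Fintype ι]

/-- The reduced Hamiltonian `Ĥ(X, X̄, q)` at a fixed time, with `Q = BR⁻¹Bᵀ`. -/
noncomputable def reducedHamiltonian (A F G Q : Matrix ι ι ℝ) (C H Xbar : ι → ℝ) (J : ℝ)
    (X q : ι → ℝ) : ℝ :=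
  -(1/2) * (q ⬝ᵥ Q *ᵥ q) + X ⬝ᵥ Aᵀ *ᵥ q + C ⬝ᵥ q + H ⬝ᵥ X + Xbar ⬝ᵥ F *ᵥ X + X ⬝ᵥ G *ᵥ X + J

/-- Pointwise form of the verification: `τ` stands for `tr(aη)`, and the three summands on the
left are `∂ₜu` with `∂ₜη`, `∂ₜr`, `∂ₜs` replaced by the right-hand sides of their equations. -/
theorem quadratic_ansatz_solves_hjb {A F G Q η : Matrix ι ι ℝ} (hQ : Q.IsSymm) (hη : η.IsSymm)
    (C H Xbar X r : ι → ℝ) (J τ : ℝ) :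
    -((1/2) * (X ⬝ᵥ (η * Q * η - Aᵀ * η - η * A - (2:ℝ) • G) *ᵥ X)
        + X ⬝ᵥ -((Aᵀ - η * Q) *ᵥ r + η *ᵥ C + H + Fᵀ *ᵥ Xbar + F *ᵥ Xbar)
        + -(τ - (1/2) * (r ⬝ᵥ Q *ᵥ r) + C ⬝ᵥ r + J)) - τ
      = reducedHamiltonian A F G Q C H Xbar J X (η *ᵥ X + r) + X ⬝ᵥ F *ᵥ Xbar := by
  have hηQη : X ⬝ᵥ η *ᵥ Q *ᵥ η *ᵥ X = η *ᵥ X ⬝ᵥ Q *ᵥ η *ᵥ X := hη.dotProduct_mulVec _ _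
  have hηA : X ⬝ᵥ η *ᵥ A *ᵥ X = X ⬝ᵥ Aᵀ *ᵥ η *ᵥ X := by
    rw [hη.dotProduct_mulVec, dotProduct_transpose_mulVec]
  have hηQr : X ⬝ᵥ η *ᵥ Q *ᵥ r = η *ᵥ X ⬝ᵥ Q *ᵥ r := hη.dotProduct_mulVec _ _
  have hrQη : r ⬝ᵥ Q *ᵥ η *ᵥ X = η *ᵥ X ⬝ᵥ Q *ᵥ r := by
    rw [hQ.dotProduct_mulVec, dotProduct_comm]
  have hηC : X ⬝ᵥ η *ᵥ C = C ⬝ᵥ η *ᵥ X := by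
    rw [hη.dotProduct_mulVec, dotProduct_comm]
  simp only [reducedHamiltonian, sub_mulVec, mulVec_add, smul_mulVec, ← mulVec_mulVec,
    dotProduct_add, add_dotProduct, dotProduct_sub, dotProduct_neg, dotProduct_smul, smul_eq_mul]
  rw [hηQη, hηA, hηQr, hrQη, hηC, dotProduct_transpose_mulVec F X Xbar, dotProduct_comm X H]
  ring

end HJB

section Calculus

variable {ι : Type*} [Fintype ι] {t : ℝ}

theorem hasDerivAt_dotProduct_of_apply {x : ℝ → ι → ℝ} {x' : ι → ℝ}
    (hx : ∀ i, HasDerivAt (fun u => x u i) (x' i) t) (v : ι → ℝ) :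
    HasDerivAt (fun u => v ⬝ᵥ x u) (v ⬝ᵥ x') t :=
  HasDerivAt.fun_sum fun i _ => (hx i).const_mul (v i)

theorem hasDerivAt_dotProduct_mulVec_of_apply {M : ℝ → Matrix ι ι ℝ} {M' : Matrix ι ι ℝ}
    (hM : ∀ i j, HasDerivAt (fun u => M u i j) (M' i j) t) (v w : ι → ℝ) :
    HasDerivAt (fun u => v ⬝ᵥ M u *ᵥ w) (v ⬝ᵥ M' *ᵥ w) t :=
  hasDerivAt_dotProduct_of_apply
    (fun i => HasDerivAt.fun_sum fun j _ => (hM i j).mul_const (w j)) v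

theorem Continuous.integral_hasDerivAt_left {E : Type*} [NormedAddCommGroup E] [NormedSpace ℝ E]
    [CompleteSpace E] {f : ℝ → E} (hf : Continuous f) (b t : ℝ) :
    HasDerivAt (fun t => ∫ u in t..b, f u) (-f t) t :=
  intervalIntegral.integral_hasDerivAt_left (hf.intervalIntegrable t b)
    (hf.stronglyMeasurableAtFilter _ _) hf.continuousAt

end Calculus

theorem statement11_general
    {n : ℕ} (T : ℝ)
    (A F G a ST : Matrix (Fin n) (Fin n) ℝ)
    (B : Fin n → ℝ) (R : ℝ) (p₂ Re : ℝ)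
    (C H : ℝ → Fin n → ℝ) (Xbar : ℝ → Fin n → ℝ) (J : ℝ → ℝ)
    (hC : Continuous C) (hJ : Continuous J)
    (η : ℝ → Matrix (Fin n) (Fin n) ℝ) (r : ℝ → Fin n → ℝ) (s : ℝ → ℝ)
    (hηsymm : ∀ t, (η t).IsSymm) (hηcont : Continuous η) (hrcont : Continuous r)
    -- Riccati equation for η with terminal condition η_T = 2S_T
    (hηode : ∀ t ∈ Set.Icc (0:ℝ) T, ∀ i j, HasDerivAt (fun u => η u i j)
      ((η t * (R⁻¹ • Matrix.vecMulVec B B) * η t - Aᵀ * η t - η t * A - (2:ℝ) • G) i j) t)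
    (hηT : η T = (2:ℝ) • ST)
    -- MFC ODE for r: −dr/dt = (Aᵀ − ηBR⁻¹Bᵀ)r + ηC + H + FᵀX̄ + FX̄, r_T = 0
    (hrode : ∀ t ∈ Set.Icc (0:ℝ) T, ∀ i, HasDerivAt (fun u => r u i)
      (-((Aᵀ - η t * (R⁻¹ • Matrix.vecMulVec B B)).mulVec (r t)
        + (η t).mulVec (C t) + H t + Fᵀ.mulVec (Xbar t) + F.mulVec (Xbar t)) i) t)
    (hrT : r T = 0)
    -- s as in the MFG case
    (hs : ∀ t, s t = p₂ * Re + ∫ u in t..T,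
      ((a * η u).trace - (1/2) * (r u ⬝ᵥ ((R⁻¹ • Matrix.vecMulVec B B).mulVec (r u)))
        + C u ⬝ᵥ r u + J u)) :
    -- u solves the MFC master HJB equation, with the correct terminal condition
    (∀ t ∈ Set.Icc (0:ℝ) T, ∀ X : Fin n → ℝ, ∃ du : ℝ,
      HasDerivAt (fun u => (1/2) * (X ⬝ᵥ ((η u).mulVec X)) + X ⬝ᵥ r u + s u) du t ∧
      -du - (a * η t).trace =
        -(1/2) * (((η t).mulVec X + r t) ⬝ᵥ
            ((R⁻¹ • Matrix.vecMulVec B B).mulVec ((η t).mulVec X + r t)))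
          + X ⬝ᵥ (Aᵀ.mulVec ((η t).mulVec X + r t))
          + C t ⬝ᵥ ((η t).mulVec X + r t)
          + H t ⬝ᵥ X + Xbar t ⬝ᵥ (F.mulVec X) + X ⬝ᵥ (G.mulVec X) + J t
          + X ⬝ᵥ (F.mulVec (Xbar t)))
    ∧ (∀ X : Fin n → ℝ,
        (1/2) * (X ⬝ᵥ ((η T).mulVec X)) + X ⬝ᵥ r T + s T =
          X ⬝ᵥ (ST.mulVec X) + p₂ * Re) := by
  set Q := R⁻¹ • vecMulVec B B
  have hQ : Q.IsSymm := IsSymm.smul (transpose_vecMulVec B B) R⁻¹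
  have hs_deriv (t : ℝ) : HasDerivAt s
      (-((a * η t).trace - (1/2) * (r t ⬝ᵥ Q *ᵥ r t) + C t ⬝ᵥ r t + J t)) t := by
    rw [funext hs]
    exact (Continuous.integral_hasDerivAt_left (by fun_prop) T t).const_add _
  refine ⟨fun t ht X => ⟨_, ?_, quadratic_ansatz_solves_hjb hQ (hηsymm t) _ _ _ X _ _ _⟩,
    fun X => ?_⟩
  · exact (((hasDerivAt_dotProduct_mulVec_of_apply (hηode t ht) X X).const_mul (1/2)).add
      (hasDerivAt_dotProduct_of_apply (hrode t ht) X)).add (hs_deriv t)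
  · rw [hrT, hηT, hs T, integral_same]
    simp [smul_mulVec, dotProduct_smul]

/-- verification for the MFC problem. If `η` solves the Riccati equation
with `η_T = 2S_T`, `r` solves the MFC linear ODE (with the extra `FX̄` term) with
`r_T = 0`, and `s_t = p₂R_e + ∫_t^T (tr(aη_u) − ½r_uᵀBR⁻¹Bᵀr_u + C_uᵀr_u + J_u)du`,
then `u(t,X) = ½XᵀηₜX + Xᵀrₜ + sₜ` solves the MFC master HJB equation
`−∂ₜu − tr(a D²u) = Ĥ(t,X,X̄ₜ,Du) + XᵀFX̄ₜ` with `u(T,X) = XᵀS_TX + p₂R_e`. -/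
theorem statement11
    {n : ℕ} (hn : 1 ≤ n) (T : ℝ) (hT : 0 < T)
    (A F G a ST : Matrix (Fin n) (Fin n) ℝ) (hG : G.IsSymm) (hST : ST.IsSymm)
    (B : Fin n → ℝ) (R : ℝ) (hR : 0 < R) (p₂ Re : ℝ)
    (C H : ℝ → Fin n → ℝ) (Xbar : ℝ → Fin n → ℝ) (J : ℝ → ℝ)
    (hC : Continuous C) (hH : Continuous H) (hXbar : Continuous Xbar) (hJ : Continuous J)
    (η : ℝ → Matrix (Fin n) (Fin n) ℝ) (r : ℝ → Fin n → ℝ) (s : ℝ → ℝ)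
    (hηsymm : ∀ t, (η t).IsSymm) (hηcont : Continuous η) (hrcont : Continuous r)
    -- Riccati equation for η with terminal condition η_T = 2S_T
    (hηode : ∀ t ∈ Set.Icc (0:ℝ) T, ∀ i j, HasDerivAt (fun u => η u i j)
      ((η t * (R⁻¹ • Matrix.vecMulVec B B) * η t - Aᵀ * η t - η t * A - (2:ℝ) • G) i j) t)
    (hηT : η T = (2:ℝ) • ST)
    -- MFC ODE for r: −dr/dt = (Aᵀ − ηBR⁻¹Bᵀ)r + ηC + H + FᵀX̄ + FX̄, r_T = 0
    (hrode : ∀ t ∈ Set.Icc (0:ℝ) T, ∀ i, HasDerivAt (fun u => r u i)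
      (-((Aᵀ - η t * (R⁻¹ • Matrix.vecMulVec B B)).mulVec (r t)
        + (η t).mulVec (C t) + H t + Fᵀ.mulVec (Xbar t) + F.mulVec (Xbar t)) i) t)
    (hrT : r T = 0)
    -- s as in the MFG case
    (hs : ∀ t, s t = p₂ * Re + ∫ u in t..T,
      ((a * η u).trace - (1/2) * (r u ⬝ᵥ ((R⁻¹ • Matrix.vecMulVec B B).mulVec (r u)))
        + C u ⬝ᵥ r u + J u)) :
    -- u solves the MFC master HJB equation, with the correct terminal condition
    (∀ t ∈ Set.Icc (0:ℝ) T, ∀ X : Fin n → ℝ, ∃ du : ℝ,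
      HasDerivAt (fun u => (1/2) * (X ⬝ᵥ ((η u).mulVec X)) + X ⬝ᵥ r u + s u) du t ∧
      -du - (a * η t).trace =
        -(1/2) * (((η t).mulVec X + r t) ⬝ᵥ
            ((R⁻¹ • Matrix.vecMulVec B B).mulVec ((η t).mulVec X + r t)))
          + X ⬝ᵥ (Aᵀ.mulVec ((η t).mulVec X + r t))
          + C t ⬝ᵥ ((η t).mulVec X + r t)
          + H t ⬝ᵥ X + Xbar t ⬝ᵥ (F.mulVec X) + X ⬝ᵥ (G.mulVec X) + J t
          + X ⬝ᵥ (F.mulVec (Xbar t)))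
    ∧ (∀ X : Fin n → ℝ,
        (1/2) * (X ⬝ᵥ ((η T).mulVec X)) + X ⬝ᵥ r T + s T =
          X ⬝ᵥ (ST.mulVec X) + p₂ * Re) :=
  statement11_general T A F G a ST B R p₂ Re C H Xbar J hC hJ η r s hηsymm hηcont hrcont hηode hηT
    hrode hrT hs
end
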